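/- arXiv:1111.5257 — 6 statements merged into one kernel-verified Lean document; each statement's English description precedes it below -/
import Mathlib

section
/- Let ρ be an n×n complex matrix that is positive semidefinite with trace 1 (a density matrix), and suppose ρ is classical, i.e., trace(ρ·(X·Y − Y·X)) = 0 for all n×n complex matrices X, Y. Then for every pair of positive semidefinite n×n complex matrices X, Y, the number trace(ρ·(X·Y + Y·X)) is a nonnegative real number (its real part is ≥ 0 and its imaginary part is 0). -/
open Matrix ComplexOrder

/-!
Both halves of the anticommutator have the same expectation, so it suffices that
`tr (ρ X Y) ≥ 0`. Write `X = Cᴴ C`; the hypothesis lets `Cᴴ` be moved past `C Y` inside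
`tr (ρ · _)`, giving `tr (ρ X Y) = tr ((Cᴴ ρ C) Y)`, the trace of a product of two positive
semidefinite matrices, which is nonnegative.
-/

namespace Matrix

variable {𝕜 m : Type*} [RCLike 𝕜] [Fintype m]

open scoped MatrixOrder in
theorem PosSemidef.trace_mul_nonneg {A B : Matrix m m 𝕜}
    (hA : A.PosSemidef) (hB : B.PosSemidef) : 0 ≤ (A * B).trace := by
  classical
  obtain ⟨C, rfl⟩ := CStarAlgebra.nonneg_iff_eq_star_mul_self.mp hB.nonneg
  rw [star_eq_conjTranspose, ← mul_assoc, trace_mul_cycle]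
  exact (hA.mul_mul_conjTranspose_same C).trace_nonneg

theorem trace_mul_mul_comm_of_trace_mul_commutator_eq_zero {ρ : Matrix m m 𝕜}
    (hρ : ∀ X Y : Matrix m m 𝕜, (ρ * (X * Y - Y * X)).trace = 0) (X Y : Matrix m m 𝕜) :
    (ρ * (X * Y)).trace = (ρ * (Y * X)).trace := by
  rw [← sub_eq_zero, ← trace_sub, ← mul_sub]
  exact hρ X Y

open scoped MatrixOrder in
theorem PosSemidef.trace_mul_mul_nonneg_of_trace_mul_commutator_eq_zero {ρ X Y : Matrix m m 𝕜}
    (hρ : ρ.PosSemidef) (hcomm : ∀ X Y : Matrix m m 𝕜, (ρ * (X * Y - Y * X)).trace = 0)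
    (hX : X.PosSemidef) (hY : Y.PosSemidef) : 0 ≤ (ρ * (X * Y)).trace := by
  classical
  obtain ⟨C, rfl⟩ := CStarAlgebra.nonneg_iff_eq_star_mul_self.mp hX.nonneg
  rw [star_eq_conjTranspose]
  calc 0 ≤ (Cᴴ * ρ * C * Y).trace :=
        (hρ.conjTranspose_mul_mul_same C).trace_mul_nonneg hY
    _ = (ρ * (C * Y * Cᴴ)).trace := by
        rw [mul_assoc, mul_assoc, trace_mul_comm, mul_assoc]
    _ = (ρ * (Cᴴ * C * Y)).trace := by
        rw [mul_assoc Cᴴ, trace_mul_mul_comm_of_trace_mul_commutator_eq_zero hcomm]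

end Matrix

theorem classical_state_anticommutator_nonneg_general
    {n : ℕ} (ρ : Matrix (Fin n) (Fin n) ℂ)
    (hρ : ρ.PosSemidef)
    (hcl : ∀ X Y : Matrix (Fin n) (Fin n) ℂ, (ρ * (X * Y - Y * X)).trace = 0) :
    ∀ X Y : Matrix (Fin n) (Fin n) ℂ, X.PosSemidef → Y.PosSemidef →
      0 ≤ (ρ * (X * Y + Y * X)).trace.re ∧ (ρ * (X * Y + Y * X)).trace.im = 0 := by
  intro X Y hX hY
  have hsum : (ρ * (X * Y + Y * X)).trace = 2 * (ρ * (X * Y)).trace := by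
    rw [mul_add, trace_add, ← trace_mul_mul_comm_of_trace_mul_commutator_eq_zero hcl]
    ring
  have hpos : 0 ≤ (ρ * (X * Y + Y * X)).trace := by
    rw [hsum]
    exact mul_nonneg zero_le_two
      (hρ.trace_mul_mul_nonneg_of_trace_mul_commutator_eq_zero hcl hX hY)
  exact ⟨(Complex.nonneg_iff.mp hpos).1, (Complex.nonneg_iff.mp hpos).2.symm⟩

/-- A classical density matrix gives a nonnegative real expectation value to
the anticommutator of any two positive semidefinite matrices. -/
theorem classical_state_anticommutator_nonneg
    {n : ℕ} (ρ : Matrix (Fin n) (Fin n) ℂ)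
    (hρ : ρ.PosSemidef) (htr : ρ.trace = 1)
    (hcl : ∀ X Y : Matrix (Fin n) (Fin n) ℂ, (ρ * (X * Y - Y * X)).trace = 0) :
    ∀ X Y : Matrix (Fin n) (Fin n) ℂ, X.PosSemidef → Y.PosSemidef →
      0 ≤ (ρ * (X * Y + Y * X)).trace.re ∧ (ρ * (X * Y + Y * X)).trace.im = 0 :=
  classical_state_anticommutator_nonneg_general ρ hρ hcl
end

section
/- Let |+⟩ = (e₀ + e₁)/√2 and |−⟩ = (e₀ − e₁)/√2 in ℂ², let a, b ∈ ℂ with |a|² + |b|² = 1, and let χ : (Fin 2 × Fin 2) → ℂ be the vector χ = a • (|+⟩ ⊗ |−⟩) + b • (|−⟩ ⊗ |+⟩). Let E_Bell = 2•1 + √2 • (σx ⊗ₖ σx + σy ⊗ₖ σy), where σx = !![0,1;1,0] and σy = !![0,−i;i,0]. Then the quadratic form ⟨χ, E_Bell.mulVec χ⟩ equals 2 − √2 + 2√2·Re(conj(a)·b). In particular it is negative if and only if Re(conj(a)·b) < −(√2 − 1)/2. -/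
/-!
The states `|+−⟩` and `|−+⟩` are orthonormal, and since `σx` fixes `|+⟩`, negates `|−⟩`, and
`σy` exchanges them up to the phases `∓i`, the operator `σx ⊗ σx + σy ⊗ σy` maps `|+−⟩` to
`|−+⟩ − |+−⟩` and `|−+⟩` to `|+−⟩ − |−+⟩`. In the basis `(|+−⟩, |−+⟩)` the Bell operator is
therefore `[[2 − √2, √2], [√2, 2 − √2]]`, whose expectation in `a|+−⟩ + b|−+⟩` is
`(2 − √2)(|a|² + |b|²) + √2 (a̅b + b̅a) = 2 − √2 + 2√2 Re(a̅b)`.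
-/

open Matrix Kronecker

namespace Matrix

variable {R m n m' n' : Type*}

def tensorVec [Mul R] (u : m → R) (v : n → R) : m × n → R := fun p => u p.1 * v p.2

theorem kronecker_mulVec_tensorVec [CommSemiring R] [Fintype m'] [Fintype n']
    (A : Matrix m m' R) (B : Matrix n n' R) (u : m' → R) (v : n' → R) :
    (A ⊗ₖ B) *ᵥ tensorVec u v = tensorVec (A *ᵥ u) (B *ᵥ v) := by
  ext ⟨i, j⟩
  simp only [mulVec, dotProduct, tensorVec, kronecker_apply, Fintype.sum_prod_type,
    Finset.sum_mul_sum]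
  exact Finset.sum_congr rfl fun _ _ => Finset.sum_congr rfl fun _ _ => by ring

theorem star_tensorVec [CommSemiring R] [StarRing R] (u : m → R) (v : n → R) :
    star (tensorVec u v) = tensorVec (star u) (star v) :=
  funext fun _ => star_mul' _ _

theorem tensorVec_dotProduct_tensorVec [CommSemiring R] [Fintype m] [Fintype n]
    (u u' : m → R) (v v' : n → R) :
    tensorVec u v ⬝ᵥ tensorVec u' v' = (u ⬝ᵥ u') * (v ⬝ᵥ v') := by
  simp only [dotProduct, tensorVec, Fintype.sum_prod_type, Finset.sum_mul_sum]
  exact Finset.sum_congr rfl fun _ _ => Finset.sum_congr rfl fun _ _ => by ring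

theorem sum_sum_starRingEnd_mul_mul [Fintype n] [CommSemiring R] [StarRing R]
    (M : Matrix n n R) (x : n → R) :
    ∑ i, ∑ j, starRingEnd R (x i) * M i j * x j = star x ⬝ᵥ M *ᵥ x := by
  simp only [dotProduct, mulVec, Finset.mul_sum, mul_assoc, Pi.star_apply, starRingEnd_apply]

theorem star_smul_add_smul_dotProduct_mulVec [Fintype n] [CommSemiring R] [StarRing R]
    (M : Matrix n n R) (a b : R) (x y : n → R) :
    star (a • x + b • y) ⬝ᵥ M *ᵥ (a • x + b • y) =
      star a * a * (star x ⬝ᵥ M *ᵥ x) + star a * b * (star x ⬝ᵥ M *ᵥ y)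
        + star b * a * (star y ⬝ᵥ M *ᵥ x) + star b * b * (star y ⬝ᵥ M *ᵥ y) := by
  simp only [star_add, star_smul, mulVec_add, mulVec_smul, add_dotProduct, dotProduct_add,
    smul_dotProduct, dotProduct_smul, smul_eq_mul]
  ring

end Matrix

namespace Complex

theorem star_mul_self_add_star_mul_self_eq_one {a b : ℂ} (h : ‖a‖ ^ 2 + ‖b‖ ^ 2 = 1) :
    star a * a + star b * b = 1 := by
  rw [star_def, mul_comm, mul_conj, mul_comm, mul_conj, normSq_eq_norm_sq, normSq_eq_norm_sq]
  exact_mod_cast h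

theorem star_mul_add_star_mul (a b : ℂ) :
    star a * b + star b * a = 2 * ((starRingEnd ℂ a * b).re : ℂ) := by
  rw [re_eq_add_conj, map_mul, conj_conj, star_def]
  ring

theorem inv_ofReal_sqrt_two_mul_self : (Real.sqrt 2 : ℂ)⁻¹ * (Real.sqrt 2 : ℂ)⁻¹ = 2⁻¹ := by
  rw [← mul_inv, ← ofReal_mul, Real.mul_self_sqrt zero_le_two, ofReal_ofNat]

end Complex

noncomputable def ketPlus : Fin 2 → ℂ := ![((1 / Real.sqrt 2 : ℝ) : ℂ), ((1 / Real.sqrt 2 : ℝ) : ℂ)]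

noncomputable def ketMinus : Fin 2 → ℂ :=
  ![((1 / Real.sqrt 2 : ℝ) : ℂ), (-(1 / Real.sqrt 2 : ℝ) : ℂ)]

def pauliX : Matrix (Fin 2) (Fin 2) ℂ := !![0, 1; 1, 0]

def pauliY : Matrix (Fin 2) (Fin 2) ℂ := !![0, -Complex.I; Complex.I, 0]

theorem pauliX_mulVec_ketPlus : pauliX *ᵥ ketPlus = ketPlus := by
  ext i; fin_cases i <;> simp [pauliX, ketPlus]

theorem pauliX_mulVec_ketMinus : pauliX *ᵥ ketMinus = -ketMinus := by
  ext i; fin_cases i <;> simp [pauliX, ketMinus]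

theorem pauliY_mulVec_ketPlus : pauliY *ᵥ ketPlus = -Complex.I • ketMinus := by
  ext i; fin_cases i <;> simp [pauliY, ketPlus, ketMinus, mul_comm]

theorem pauliY_mulVec_ketMinus : pauliY *ᵥ ketMinus = Complex.I • ketPlus := by
  ext i; fin_cases i <;> simp [pauliY, ketPlus, ketMinus, mul_comm]

theorem star_ketPlus_dotProduct_ketPlus : star ketPlus ⬝ᵥ ketPlus = 1 := by
  simp [ketPlus, dotProduct, Complex.inv_ofReal_sqrt_two_mul_self]
  norm_num

theorem star_ketMinus_dotProduct_ketMinus : star ketMinus ⬝ᵥ ketMinus = 1 := by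
  simp [ketMinus, dotProduct, Complex.inv_ofReal_sqrt_two_mul_self]
  norm_num

theorem star_ketPlus_dotProduct_ketMinus : star ketPlus ⬝ᵥ ketMinus = 0 := by
  simp [ketPlus, ketMinus, dotProduct]

theorem star_ketMinus_dotProduct_ketPlus : star ketMinus ⬝ᵥ ketPlus = 0 := by
  simp [ketPlus, ketMinus, dotProduct]

theorem pauliXX_add_pauliYY_mulVec_plusMinus :
    (pauliX ⊗ₖ pauliX + pauliY ⊗ₖ pauliY) *ᵥ tensorVec ketPlus ketMinus
      = tensorVec ketMinus ketPlus - tensorVec ketPlus ketMinus := by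
  rw [add_mulVec, kronecker_mulVec_tensorVec, kronecker_mulVec_tensorVec, pauliX_mulVec_ketPlus,
    pauliX_mulVec_ketMinus, pauliY_mulVec_ketPlus, pauliY_mulVec_ketMinus]
  ext p
  simp only [tensorVec, Pi.add_apply, Pi.sub_apply, Pi.neg_apply, Pi.smul_apply, smul_eq_mul]
  linear_combination (-(ketMinus p.1 * ketPlus p.2)) * Complex.I_mul_I

theorem pauliXX_add_pauliYY_mulVec_minusPlus :
    (pauliX ⊗ₖ pauliX + pauliY ⊗ₖ pauliY) *ᵥ tensorVec ketMinus ketPlus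
      = tensorVec ketPlus ketMinus - tensorVec ketMinus ketPlus := by
  rw [add_mulVec, kronecker_mulVec_tensorVec, kronecker_mulVec_tensorVec, pauliX_mulVec_ketPlus,
    pauliX_mulVec_ketMinus, pauliY_mulVec_ketPlus, pauliY_mulVec_ketMinus]
  ext p
  simp only [tensorVec, Pi.add_apply, Pi.sub_apply, Pi.neg_apply, Pi.smul_apply, smul_eq_mul]
  linear_combination (-(ketPlus p.1 * ketMinus p.2)) * Complex.I_mul_I

noncomputable def bellOperator : Matrix (Fin 2 × Fin 2) (Fin 2 × Fin 2) ℂ :=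
  (2 : ℂ) • 1 + (Real.sqrt 2 : ℂ) • (pauliX ⊗ₖ pauliX + pauliY ⊗ₖ pauliY)

theorem bellOperator_mulVec_plusMinus :
    bellOperator *ᵥ tensorVec ketPlus ketMinus
      = (2 - Real.sqrt 2 : ℂ) • tensorVec ketPlus ketMinus
        + (Real.sqrt 2 : ℂ) • tensorVec ketMinus ketPlus := by
  rw [bellOperator, add_mulVec, smul_mulVec, smul_mulVec, one_mulVec,
    pauliXX_add_pauliYY_mulVec_plusMinus]
  module

theorem bellOperator_mulVec_minusPlus :
    bellOperator *ᵥ tensorVec ketMinus ketPlus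
      = (Real.sqrt 2 : ℂ) • tensorVec ketPlus ketMinus
        + (2 - Real.sqrt 2 : ℂ) • tensorVec ketMinus ketPlus := by
  rw [bellOperator, add_mulVec, smul_mulVec, smul_mulVec, one_mulVec,
    pauliXX_add_pauliYY_mulVec_minusPlus]
  module

theorem star_dotProduct_bellOperator_mulVec (a b : ℂ) :
    star (a • tensorVec ketPlus ketMinus + b • tensorVec ketMinus ketPlus) ⬝ᵥ
        bellOperator *ᵥ (a • tensorVec ketPlus ketMinus + b • tensorVec ketMinus ketPlus)
      = (2 - Real.sqrt 2) * (star a * a + star b * b)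
        + Real.sqrt 2 * (star a * b + star b * a) := by
  rw [star_smul_add_smul_dotProduct_mulVec, bellOperator_mulVec_plusMinus,
    bellOperator_mulVec_minusPlus]
  simp only [dotProduct_add, dotProduct_smul, star_tensorVec, tensorVec_dotProduct_tensorVec,
    star_ketPlus_dotProduct_ketPlus, star_ketPlus_dotProduct_ketMinus,
    star_ketMinus_dotProduct_ketPlus, star_ketMinus_dotProduct_ketMinus, smul_eq_mul]
  ring

theorem two_sub_sqrt_two_add_mul_neg_iff (r : ℝ) :
    2 - Real.sqrt 2 + 2 * Real.sqrt 2 * r < 0 ↔ r < -(Real.sqrt 2 - 1) / 2 := by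
  have hfactor : 2 - Real.sqrt 2 + 2 * Real.sqrt 2 * r
      = Real.sqrt 2 * (Real.sqrt 2 - 1 + 2 * r) := by
    linear_combination -Real.mul_self_sqrt (zero_le_two (α := ℝ))
  rw [hfactor, ← mul_zero (Real.sqrt 2), mul_lt_mul_iff_of_pos_left (by positivity)]
  constructor <;> intro h <;> linarith

/-- The expectation value of the Bell-CHSH observable
`E_Bell = 2•1 + √2 (σx ⊗ₖ σx + σy ⊗ₖ σy)` in the state `χ = a|+−⟩ + b|−+⟩`
equals `2 − √2 + 2√2 Re(a̅ b)`; in particular it is negative iff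
`Re(a̅ b) < −(√2 − 1)/2`. -/
theorem bell_expectation_in_chi
    (plus minus : Fin 2 → ℂ)
    (hplus : plus = ![((1 / Real.sqrt 2 : ℝ) : ℂ), ((1 / Real.sqrt 2 : ℝ) : ℂ)])
    (hminus : minus = ![((1 / Real.sqrt 2 : ℝ) : ℂ), (-(1 / Real.sqrt 2 : ℝ) : ℂ)])
    (a b : ℂ) (hab : ‖a‖ ^ 2 + ‖b‖ ^ 2 = 1)
    (χ : Fin 2 × Fin 2 → ℂ)
    (hχ : ∀ p : Fin 2 × Fin 2,
      χ p = a * plus p.1 * minus p.2 + b * minus p.1 * plus p.2)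
    (σx σy : Matrix (Fin 2) (Fin 2) ℂ)
    (hσx : σx = !![0, 1; 1, 0])
    (hσy : σy = !![0, -Complex.I; Complex.I, 0])
    (EBell : Matrix (Fin 2 × Fin 2) (Fin 2 × Fin 2) ℂ)
    (hEBell : EBell = (2 : ℂ) • (1 : Matrix (Fin 2 × Fin 2) (Fin 2 × Fin 2) ℂ)
      + (Real.sqrt 2 : ℂ) • (σx ⊗ₖ σx + σy ⊗ₖ σy)) :
    (∑ p : Fin 2 × Fin 2, ∑ q : Fin 2 × Fin 2,
        (starRingEnd ℂ) (χ p) * EBell p q * χ q)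
      = ((2 - Real.sqrt 2 + 2 * Real.sqrt 2 * ((starRingEnd ℂ) a * b).re : ℝ) : ℂ) ∧
    ((∑ p : Fin 2 × Fin 2, ∑ q : Fin 2 × Fin 2,
        (starRingEnd ℂ) (χ p) * EBell p q * χ q).re < 0
      ↔ ((starRingEnd ℂ) a * b).re < -(Real.sqrt 2 - 1) / 2) := by
  obtain rfl : plus = ketPlus := hplus
  obtain rfl : minus = ketMinus := hminus
  obtain rfl : σx = pauliX := hσx
  obtain rfl : σy = pauliY := hσy
  obtain rfl : EBell = bellOperator := hEBell
  have hχ' : χ = a • tensorVec ketPlus ketMinus + b • tensorVec ketMinus ketPlus :=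
    funext fun p => by
      simp only [hχ, tensorVec, Pi.add_apply, Pi.smul_apply, smul_eq_mul, mul_assoc]
  have hexpect : (∑ p, ∑ q, (starRingEnd ℂ) (χ p) * bellOperator p q * χ q)
      = ((2 - Real.sqrt 2 + 2 * Real.sqrt 2 * ((starRingEnd ℂ) a * b).re : ℝ) : ℂ) := by
    rw [sum_sum_starRingEnd_mul_mul, hχ', star_dotProduct_bellOperator_mulVec,
      Complex.star_mul_self_add_star_mul_self_eq_one hab, Complex.star_mul_add_star_mul]
    push_cast
    ring
  rw [hexpect, Complex.ofReal_re]
  exact ⟨rfl, two_sub_sqrt_two_add_mul_neg_iff _⟩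
end

section
/- Let A₁, A₂ be n×n complex matrices and B₁, B₂ be m×m complex matrices with B₁² = 1 and B₂² = 1. Define X = 2•1 + A₁ ⊗ₖ B₁ + A₁ ⊗ₖ B₂, Y = 2•1 + A₂ ⊗ₖ B₁ − A₂ ⊗ₖ B₂, and E_Bell = 2•1 + A₁ ⊗ₖ B₁ + A₁ ⊗ₖ B₂ + A₂ ⊗ₖ B₁ − A₂ ⊗ₖ B₂. Then X·Y + Y·X = 4 • E_Bell − (A₁·A₂ − A₂·A₁) ⊗ₖ (B₁·B₂ − B₂·B₁). -/
open Matrix Kronecker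


lemma sub_kron {l p q r : Type*} (A B : Matrix l p ℂ) (C : Matrix q r ℂ) :
    (A - B) ⊗ₖ C = A ⊗ₖ C - B ⊗ₖ C := by
  ext ⟨i,j⟩ ⟨k,l⟩; simp [Matrix.kroneckerMap_apply, sub_mul]

lemma kron_sub {l p q r : Type*} (A : Matrix l p ℂ) (B C : Matrix q r ℂ) :
    A ⊗ₖ (B - C) = A ⊗ₖ B - A ⊗ₖ C := by
  ext ⟨i,j⟩ ⟨k,l⟩; simp [Matrix.kroneckerMap_apply, mul_sub]

/-- With `X = 2•1 + A₁⊗ₖB₁ + A₁⊗ₖB₂` and `Y = 2•1 + A₂⊗ₖB₁ − A₂⊗ₖB₂`, one has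
`{X,Y} = 4•E_Bell − [A₁,A₂] ⊗ₖ [B₁,B₂]`. -/
theorem anticommutator_eq_bell_minus_commutators
    {n m : ℕ}
    (A₁ A₂ : Matrix (Fin n) (Fin n) ℂ) (B₁ B₂ : Matrix (Fin m) (Fin m) ℂ)
    (hB₁sq : B₁ * B₁ = 1) (hB₂sq : B₂ * B₂ = 1)
    (X Y EBell : Matrix (Fin n × Fin m) (Fin n × Fin m) ℂ)
    (hX : X = (2 : ℂ) • (1 : Matrix (Fin n × Fin m) (Fin n × Fin m) ℂ)
      + A₁ ⊗ₖ B₁ + A₁ ⊗ₖ B₂)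
    (hY : Y = (2 : ℂ) • (1 : Matrix (Fin n × Fin m) (Fin n × Fin m) ℂ)
      + A₂ ⊗ₖ B₁ - A₂ ⊗ₖ B₂)
    (hE : EBell = (2 : ℂ) • (1 : Matrix (Fin n × Fin m) (Fin n × Fin m) ℂ)
      + A₁ ⊗ₖ B₁ + A₁ ⊗ₖ B₂ + A₂ ⊗ₖ B₁ - A₂ ⊗ₖ B₂) :
    X * Y + Y * X
      = (4 : ℂ) • EBell - (A₁ * A₂ - A₂ * A₁) ⊗ₖ (B₁ * B₂ - B₂ * B₁) := by
  subst hX hY hE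
  simp only [Matrix.mul_add, Matrix.add_mul, Matrix.sub_mul, Matrix.mul_sub,
    Matrix.smul_mul, Matrix.mul_smul, Matrix.one_mul, Matrix.mul_one,
    smul_add, smul_sub, smul_smul]
  simp only [← Matrix.mul_kronecker_mul]
  simp only [hB₁sq, hB₂sq, sub_kron, kron_sub, Matrix.add_kronecker,
    Matrix.kronecker_add]
  module
end

section
/- Let A₁, A₂ be Hermitian n×n complex matrices with A₁² = 1, A₂² = 1 and A₁·A₂ = A₂·A₁ (commuting dichotomic observables for Alice), and let B₁, B₂ be Hermitian m×m complex matrices with B₁² = 1, B₂² = 1 (dichotomic observables for Bob). Then the Bell-CHSH operators 2•1 + (A₁ ⊗ₖ B₁ + A₁ ⊗ₖ B₂ + A₂ ⊗ₖ B₁ − A₂ ⊗ₖ B₂) and 2•1 − (A₁ ⊗ₖ B₁ + A₁ ⊗ₖ B₂ + A₂ ⊗ₖ B₁ − A₂ ⊗ₖ B₂) are positive semidefinite. (If one of the two local algebras is commutative, the Bell-CHSH inequality holds.) -/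
open Matrix Kronecker ComplexOrder

lemma kron_isHermitian {n m : ℕ} {X : Matrix (Fin n) (Fin n) ℂ}
    {Y : Matrix (Fin m) (Fin m) ℂ} (hX : X.IsHermitian) (hY : Y.IsHermitian) :
    (X ⊗ₖ Y).IsHermitian := by
  ext ⟨i, j⟩ ⟨k, l⟩
  simp only [Matrix.conjTranspose_apply, Matrix.kroneckerMap_apply, star_mul',
    hX.apply, hY.apply]

lemma posSemidef_of_sq {N : Type*} [Fintype N] [DecidableEq N] (M : Matrix N N ℂ)
    (hM : M.IsHermitian) (h : M * M = (4 : ℂ) • M) :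
    M.PosSemidef := by
  have key : M = ((1/2 : ℂ) • M)ᴴ * ((1/2 : ℂ) • M) := by
    rw [Matrix.conjTranspose_smul, hM.eq]
    rw [Matrix.smul_mul, Matrix.mul_smul, h]
    rw [smul_smul, smul_smul]
    norm_num
  rw [key]
  exact Matrix.posSemidef_conjTranspose_mul_self _

/-- If Alice's dichotomic observables commute, the Bell-CHSH inequality holds:
both `2•1 ± (A₁⊗ₖB₁ + A₁⊗ₖB₂ + A₂⊗ₖB₁ − A₂⊗ₖB₂)` are positive semidefinite. -/
theorem bell_inequality_of_commuting_alice
    {n m : ℕ}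
    (A₁ A₂ : Matrix (Fin n) (Fin n) ℂ) (B₁ B₂ : Matrix (Fin m) (Fin m) ℂ)
    (hA₁ : A₁.IsHermitian) (hA₂ : A₂.IsHermitian)
    (hB₁ : B₁.IsHermitian) (hB₂ : B₂.IsHermitian)
    (hA₁sq : A₁ * A₁ = 1) (hA₂sq : A₂ * A₂ = 1)
    (hB₁sq : B₁ * B₁ = 1) (hB₂sq : B₂ * B₂ = 1)
    (hcomm : A₁ * A₂ = A₂ * A₁) :
    ((2 : ℂ) • (1 : Matrix (Fin n × Fin m) (Fin n × Fin m) ℂ)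
      + (A₁ ⊗ₖ B₁ + A₁ ⊗ₖ B₂ + A₂ ⊗ₖ B₁ - A₂ ⊗ₖ B₂)).PosSemidef ∧
    ((2 : ℂ) • (1 : Matrix (Fin n × Fin m) (Fin n × Fin m) ℂ)
      - (A₁ ⊗ₖ B₁ + A₁ ⊗ₖ B₂ + A₂ ⊗ₖ B₁ - A₂ ⊗ₖ B₂)).PosSemidef := by
  set C : Matrix (Fin n × Fin m) (Fin n × Fin m) ℂ :=
    A₁ ⊗ₖ B₁ + A₁ ⊗ₖ B₂ + A₂ ⊗ₖ B₁ - A₂ ⊗ₖ B₂ with hCdef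
  have hCH : C.IsHermitian := by
    refine ((((kron_isHermitian hA₁ hB₁).add (kron_isHermitian hA₁ hB₂)).add
      (kron_isHermitian hA₂ hB₁)).sub (kron_isHermitian hA₂ hB₂))
  have hC2 : C * C = (4 : ℂ) • 1 := by
    rw [hCdef]
    simp only [Matrix.add_mul, Matrix.sub_mul, Matrix.mul_add, Matrix.mul_sub,
      ← Matrix.mul_kronecker_mul, hA₁sq, hA₂sq, hB₁sq, hB₂sq, hcomm,
      Matrix.one_kronecker_one]
    module
  have hsm : ((2 : ℂ) • (1 : Matrix (Fin n × Fin m) (Fin n × Fin m) ℂ)).IsHermitian := by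
    unfold Matrix.IsHermitian
    simp
  have h1 : ((2 : ℂ) • 1 + C).IsHermitian := hsm.add hCH
  have h2 : ((2 : ℂ) • 1 - C).IsHermitian := hsm.sub hCH
  constructor
  · apply posSemidef_of_sq _ h1
    simp only [Matrix.add_mul, Matrix.mul_add]
    rw [hC2]
    simp only [Matrix.smul_mul, Matrix.mul_smul, Matrix.one_mul, Matrix.mul_one]
    module
  · apply posSemidef_of_sq _ h2
    simp only [Matrix.sub_mul, Matrix.mul_sub]
    rw [hC2]
    simp only [Matrix.smul_mul, Matrix.mul_smul, Matrix.one_mul, Matrix.mul_one]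
    module
end

section
/- There do not exist 2×2 complex positive semidefinite matrices X and Y such that X·Y + Y·X = !![0,1;1,0]. (Hence the swap operator cannot be written as an anticommutator of positive operators sector by sector.) -/
open Matrix ComplexOrder

/-!
Writing `X = Aᴴ A` and `Y = Bᴴ B`, one has `tr (X Y) = ‖A Bᴴ‖²` (Frobenius norm), so for positive
semidefinite `X`, `Y` the trace of `X Y` vanishes only if `A Bᴴ = 0`, i.e. `X Y = 0`. The
anticommutator `X Y + Y X` has trace `2 tr (X Y)`, so a traceless anticommutator of positive
semidefinite matrices is zero, whereas `!![0, 1; 1, 0]` is traceless and nonzero.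
-/

namespace Matrix.PosSemidef

variable {n 𝕜 : Type*} [Fintype n] [RCLike 𝕜]

open scoped MatrixOrder in
theorem mul_eq_zero_of_trace_mul_eq_zero {X Y : Matrix n n 𝕜} (hX : X.PosSemidef)
    (hY : Y.PosSemidef) (h : (X * Y).trace = 0) : X * Y = 0 := by
  classical
  obtain ⟨A, rfl⟩ := CStarAlgebra.nonneg_iff_eq_star_mul_self.mp hX.nonneg
  obtain ⟨B, rfl⟩ := CStarAlgebra.nonneg_iff_eq_star_mul_self.mp hY.nonneg
  simp only [star_eq_conjTranspose] at h ⊢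
  have hAB : A * Bᴴ = 0 := by
    rw [← trace_mul_conjTranspose_self_eq_zero_iff, conjTranspose_mul, conjTranspose_conjTranspose,
      ← h]
    simp only [Matrix.mul_assoc]
    rw [trace_mul_comm Aᴴ]
    simp only [Matrix.mul_assoc]
  rw [Matrix.mul_assoc, ← Matrix.mul_assoc A, hAB, Matrix.zero_mul, Matrix.mul_zero]

theorem anticommutator_eq_zero_of_trace_eq_zero {X Y : Matrix n n 𝕜} (hX : X.PosSemidef)
    (hY : Y.PosSemidef) (h : (X * Y + Y * X).trace = 0) : X * Y + Y * X = 0 := by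
  have hXY : (X * Y).trace = 0 := by
    rw [trace_add, trace_mul_comm Y] at h
    exact add_self_eq_zero.mp h
  rw [hX.mul_eq_zero_of_trace_mul_eq_zero hY hXY,
    hY.mul_eq_zero_of_trace_mul_eq_zero hX (trace_mul_comm X Y ▸ hXY), add_zero]

end Matrix.PosSemidef

/-- The matrix `!![0,1;1,0]` cannot be written as the anticommutator of two
positive semidefinite `2×2` matrices. -/
theorem no_anticommutator_representation_of_offdiag :
    ¬ ∃ X Y : Matrix (Fin 2) (Fin 2) ℂ,
      X.PosSemidef ∧ Y.PosSemidef ∧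
      X * Y + Y * X = !![0, 1; 1, 0] := by
  rintro ⟨X, Y, hX, hY, h⟩
  have hzero := hX.anticommutator_eq_zero_of_trace_eq_zero hY (by simp [h, trace_fin_two])
  have h01 := congrFun (congrFun (h.symm.trans hzero) 0) 1
  simp at h01
end

section
/- Let S be the swap operator on ℂ² ⊗ ℂ², i.e., the complex matrix indexed by (Fin 2 × Fin 2) with S (i,j) (k,l) = 1 if i = l and j = k, and 0 otherwise. For every real ξ with 0 < ξ < 1, there exist positive semidefinite complex matrices X and Y indexed by (Fin 2 × Fin 2) such that X·Y + Y·X = ξ • 1 + S, i.e., S = X·Y + Y·X − ξ • 1. -/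
/-!
On `span{|00⟩, |11⟩}` the matrix `ξ • 1 + S` is `(1 + ξ) • 1`, and on `span{|01⟩, |10⟩}` it is
`!![ξ, 1; 1, ξ]`, indefinite for `ξ < 1`. For a diagonal `X` with weights `x_p` we have
`(X * Y + Y * X) p q = (x_p + x_q) * Y p q`, so the weights determine `Y`. Equal weights on
`|01⟩, |10⟩` would force a block of `Y` with negative determinant `(ξ² - 1) / (4 x²)`; the weights
`1` and `t = ξ² / 4` instead force `!![ξ / 2, q; q, 2 / ξ]` with `q = 1 / (1 + t) ≤ 1`, of
determinant `1 - q² ≥ 0`. That block is `diag(0, 2 (1 - q²) / ξ) + (2 / ξ) • w wᴴ` with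
`w = (ξ / 2, q)`.
-/

open Matrix ComplexOrder

theorem Matrix.diagonal_mul_add_mul_diagonal_apply {n R : Type*} [Fintype n] [DecidableEq n]
    [CommSemiring R] (d : n → R) (A : Matrix n n R) (i j : n) :
    (diagonal d * A + A * diagonal d) i j = (d i + d j) * A i j := by
  rw [add_apply, diagonal_mul, mul_diagonal, add_mul, mul_comm (d j)]

namespace ShiftedSwap

def swapMatrix : Matrix (Fin 2 × Fin 2) (Fin 2 × Fin 2) ℂ :=
  of fun p q => if p.1 = q.2 ∧ p.2 = q.1 then 1 else 0

variable (ξ : ℝ)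

noncomputable def coupling : ℝ := 4 / (4 + ξ ^ 2)

theorem coupling_sq_le_one : coupling ξ ^ 2 ≤ 1 := by
  rw [coupling, div_pow, div_le_one (by positivity)]
  nlinarith [sq_nonneg ξ]

-- Functions on `Fin 2 × Fin 2` are written as tables `![![f 00, f 01], ![f 10, f 11]]`.
noncomputable def X : Matrix (Fin 2 × Fin 2) (Fin 2 × Fin 2) ℂ :=
  diagonal fun p => ((![![1, 1], ![ξ ^ 2 / 4, 1]] p.1 p.2 : ℝ) : ℂ)

noncomputable def couplingVec : Fin 2 × Fin 2 → ℂ :=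
  fun p => ((![![0, ξ / 2], ![coupling ξ, 0]] p.1 p.2 : ℝ) : ℂ)

noncomputable def Y : Matrix (Fin 2 × Fin 2) (Fin 2 × Fin 2) ℂ :=
  diagonal (fun p =>
      ((![![(1 + ξ) / 2, 0], ![2 * (1 - coupling ξ ^ 2) / ξ, (1 + ξ) / 2]] p.1 p.2 : ℝ) : ℂ)) +
    ((2 / ξ : ℝ) : ℂ) • vecMulVec (couplingVec ξ) (star (couplingVec ξ))

theorem posSemidef_X : (X ξ).PosSemidef := by
  refine posSemidef_diagonal_iff.2 fun p => Complex.zero_le_real.2 ?_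
  fin_cases p <;> simp
  positivity

variable {ξ}

theorem posSemidef_Y (hξ : 0 < ξ) : (Y ξ).PosSemidef := by
  refine .add (posSemidef_diagonal_iff.2 fun p => Complex.zero_le_real.2 ?_)
    ((posSemidef_vecMulVec_self_star _).smul (Complex.zero_le_real.2 (by positivity)))
  fin_cases p <;> simp <;> apply div_nonneg <;> linarith [coupling_sq_le_one ξ]

theorem X_mul_Y_add_Y_mul_X (hξ : ξ ≠ 0) :
    X ξ * Y ξ + Y ξ * X ξ = (ξ : ℂ) • 1 + swapMatrix := by
  have h4 : (4 + (ξ : ℂ) ^ 2) ≠ 0 := by exact_mod_cast (by positivity : (0 : ℝ) < 4 + ξ ^ 2).ne'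
  ext p q
  rw [X, diagonal_mul_add_mul_diagonal_apply]
  fin_cases p <;> fin_cases q <;>
    simp [Y, couplingVec, swapMatrix, coupling, one_apply, vecMulVec_apply] <;>
    field_simp <;> ring

end ShiftedSwap

open ShiftedSwap in
theorem shifted_swap_is_anticommutator_general
    (S : Matrix (Fin 2 × Fin 2) (Fin 2 × Fin 2) ℂ)
    (hS : ∀ p q : Fin 2 × Fin 2,
      S p q = if p.1 = q.2 ∧ p.2 = q.1 then 1 else 0)
    (ξ : ℝ) (hξ0 : 0 < ξ) :
    ∃ X Y : Matrix (Fin 2 × Fin 2) (Fin 2 × Fin 2) ℂ,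
      X.PosSemidef ∧ Y.PosSemidef ∧
      X * Y + Y * X = (ξ : ℂ) • (1 : Matrix (Fin 2 × Fin 2) (Fin 2 × Fin 2) ℂ) + S := by
  obtain rfl : S = swapMatrix := ext hS
  exact ⟨X ξ, Y ξ, posSemidef_X ξ, posSemidef_Y hξ0, X_mul_Y_add_Y_mul_X hξ0.ne'⟩

/-- For every `0 < ξ < 1`, the shifted swap operator `ξ•1 + S` on two qubits
can be written as the anticommutator of two positive semidefinite matrices,
i.e. `S = X·Y + Y·X − ξ•1`. -/
theorem shifted_swap_is_anticommutator
    (S : Matrix (Fin 2 × Fin 2) (Fin 2 × Fin 2) ℂ)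
    (hS : ∀ p q : Fin 2 × Fin 2,
      S p q = if p.1 = q.2 ∧ p.2 = q.1 then 1 else 0)
    (ξ : ℝ) (hξ0 : 0 < ξ) (hξ1 : ξ < 1) :
    ∃ X Y : Matrix (Fin 2 × Fin 2) (Fin 2 × Fin 2) ℂ,
      X.PosSemidef ∧ Y.PosSemidef ∧
      X * Y + Y * X = (ξ : ℂ) • (1 : Matrix (Fin 2 × Fin 2) (Fin 2 × Fin 2) ℂ) + S :=
  shifted_swap_is_anticommutator_general S hS ξ hξ0
end
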